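/- Let 𝓐=(A,δ^A,σ^A,τ^A) and 𝓑=(B,δ^B,σ^B,τ^B) be fuzzy automata over a complete residuated lattice 𝓛 and alphabet X, and let φ be a uniform fuzzy relation between A and B. Then φ is a forward bisimulation between 𝓐 and 𝓑 if and only if: (i) E_A^φ is a forward bisimulation on 𝓐; (ii) E_B^φ is a forward bisimulation on 𝓑; and (iii) φ̃ is an isomorphism of the factor fuzzy automata 𝓐/E_A^φ and 𝓑/E_B^φ. -/
import Mathlib


universe u

/-- A complete residuated lattice: a complete lattice with a commutative monoid
structure whose unit is the top element, together with a residuum operation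
forming an adjoint pair with the multiplication. -/
class CompleteResiduatedLattice (L : Type*) extends CompleteLattice L, CommMonoid L where
  /-- the residuum operation `→` -/
  res : L → L → L
  /-- the adjunction property -/
  adjunction : ∀ x y z : L, x * y ≤ z ↔ x ≤ res y z
  /-- the multiplicative unit `1` is the greatest element -/
  one_eq_top : (1 : L) = ⊤

namespace FuzzyAutomataBisim

/-- A fuzzy automaton over `L` and alphabet `X`, with state set `A`. -/
structure FuzzyAutomaton (L : Type*) [CompleteResiduatedLattice L] (X A : Type*) where
  δ : A → X → A → L
  σ : A → L
  τ : A → L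

variable {L X A B C : Type*} [CompleteResiduatedLattice L]

/-- biresiduum `x ↔ y = (x → y) ⊓ (y → x)` -/
def bires (x y : L) : L :=
  CompleteResiduatedLattice.res x y ⊓ CompleteResiduatedLattice.res y x

/-- inverse of a fuzzy relation -/
def inv (φ : A → B → L) : B → A → L := fun b a => φ a b

/-- composition of fuzzy relations -/
def rcomp (φ : A → B → L) (ψ : B → C → L) : A → C → L := fun a c => ⨆ b, φ a b * ψ b c

/-- composition of a fuzzy set with a fuzzy relation -/
def scomp (f : A → L) (φ : A → B → L) : B → L := fun b => ⨆ a, f a * φ a b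

/-- composition of a fuzzy relation with a fuzzy set -/
def rscomp (φ : A → B → L) (g : B → L) : A → L := fun a => ⨆ b, φ a b * g b

/-- degree of overlapping of two fuzzy sets -/
def sdot (f g : A → L) : L := ⨆ a, f a * g a

/-- kernel `E_A^φ` of a fuzzy relation -/
def ker (φ : A → B → L) : A → A → L := fun a₁ a₂ => ⨅ b, bires (φ a₁ b) (φ a₂ b)

/-- co-kernel `E_B^φ` of a fuzzy relation -/
def coker (φ : A → B → L) : B → B → L := fun b₁ b₂ => ⨅ a, bires (φ a b₁) (φ a b₂)

/-- `φ` is an `L`-function -/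
def IsLFun (φ : A → B → L) : Prop := ∀ a, ∃ b, φ a b = 1

/-- `φ` is surjective, i.e. `φ⁻¹` is an `L`-function -/
def IsSurj (φ : A → B → L) : Prop := ∀ b, ∃ a, φ a b = 1

/-- `φ` is a partial fuzzy function: `φ ∘ φ⁻¹ ∘ φ ≤ φ` -/
def IsPFF (φ : A → B → L) : Prop := rcomp (rcomp φ (inv φ)) φ ≤ φ

/-- `φ` is a uniform fuzzy relation: a partial fuzzy function that is a
surjective `L`-function -/
def IsUniform (φ : A → B → L) : Prop := IsPFF φ ∧ IsLFun φ ∧ IsSurj φ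

/-- the set of crisp descriptions of `φ` -/
def CR (φ : A → B → L) : Set (A → B) := {ψ | ∀ a, φ a (ψ a) = 1}

/-- `ψ : A → B` is `F`-surjective -/
def SurjMod (F : B → B → L) (ψ : A → B) : Prop := ∀ b, ∃ a, F (ψ a) b = 1

/-- fuzzy equivalence relation -/
structure IsFuzzyEquiv (E : A → A → L) : Prop where
  refl : ∀ a, E a a = 1
  symm : ∀ a b, E a b = E b a
  trans : ∀ a b c, E a b * E b c ≤ E a c

/-- fuzzy equality -/
def IsFuzzyEquality (E : A → A → L) : Prop :=
  IsFuzzyEquiv E ∧ ∀ a b, E a b = 1 → a = b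

/-- the factor set `A/E = {E_a : a ∈ A}` -/
abbrev FactorSet (E : A → A → L) := {f : A → L // ∃ a, E a = f}

/-- the class `E_a` as an element of `A/E` -/
def toClass (E : A → A → L) (a : A) : FactorSet E := ⟨E a, a, rfl⟩

/-- a chosen representative of a class -/
noncomputable def rep {E : A → A → L} (c : FactorSet E) : A := c.2.choose

/-- the fuzzy relation `Ẽ` on `A/E` -/
noncomputable def tildeRel (E : A → A → L) : FactorSet E → FactorSet E → L :=
  fun c c' => E (rep c) (rep c')

open Classical in
/-- a chosen crisp description of `φ` -/
noncomputable def crispDesc [Nonempty B] (φ : A → B → L) : A → B :=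
  fun a => if h : ∃ b, φ a b = 1 then h.choose else Classical.arbitrary B

/-- the induced map `φ̃ : A/E_A^φ → B/E_B^φ`, `φ̃(E_a) = F_{ψ(a)}` -/
noncomputable def tilde [Nonempty B] (φ : A → B → L) :
    FactorSet (ker φ) → FactorSet (coker φ) :=
  fun c => toClass (coker φ) (crispDesc φ (rep c))

/-- the fuzzy transition relation `δ_x` -/
def FuzzyAutomaton.δx (M : FuzzyAutomaton L X A) (x : X) : A → A → L := fun a b => M.δ a x b

open Classical in
/-- transitions extended to words -/
noncomputable def deltaWord (M : FuzzyAutomaton L X A) : List X → A → A → L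
  | [] => fun a b => if a = b then (1 : L) else ⊥
  | x :: u => rcomp (M.δx x) (deltaWord M u)

/-- the fuzzy language recognized by `M` : `L(M)(u) = σ ∘ δ_u ∘ τ` -/
noncomputable def lang (M : FuzzyAutomaton L X A) (u : List X) : L :=
  sdot (scomp M.σ (deltaWord M u)) M.τ

/-- forward simulation -/
def IsForwardSim (MA : FuzzyAutomaton L X A) (MB : FuzzyAutomaton L X B)
    (φ : A → B → L) : Prop :=
  MA.σ ≤ scomp MB.σ (inv φ) ∧
  (∀ x, rcomp (inv φ) (MA.δx x) ≤ rcomp (MB.δx x) (inv φ)) ∧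
  rscomp (inv φ) MA.τ ≤ MB.τ

/-- backward simulation -/
def IsBackwardSim (MA : FuzzyAutomaton L X A) (MB : FuzzyAutomaton L X B)
    (φ : A → B → L) : Prop :=
  scomp MA.σ φ ≤ MB.σ ∧
  (∀ x, rcomp (MA.δx x) φ ≤ rcomp φ (MB.δx x)) ∧
  MA.τ ≤ rscomp φ MB.τ

/-- forward bisimulation -/
def IsForwardBisim (MA : FuzzyAutomaton L X A) (MB : FuzzyAutomaton L X B)
    (φ : A → B → L) : Prop :=
  IsForwardSim MA MB φ ∧ IsForwardSim MB MA (inv φ)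

/-- backward bisimulation -/
def IsBackwardBisim (MA : FuzzyAutomaton L X A) (MB : FuzzyAutomaton L X B)
    (φ : A → B → L) : Prop :=
  IsBackwardSim MA MB φ ∧ IsBackwardSim MB MA (inv φ)

/-- backward-forward bisimulation -/
def IsBFBisim (MA : FuzzyAutomaton L X A) (MB : FuzzyAutomaton L X B)
    (φ : A → B → L) : Prop :=
  IsBackwardSim MA MB φ ∧ IsForwardSim MB MA (inv φ)

/-- forward-backward bisimulation -/
def IsFBBisim (MA : FuzzyAutomaton L X A) (MB : FuzzyAutomaton L X B)
    (φ : A → B → L) : Prop :=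
  IsForwardSim MA MB φ ∧ IsBackwardSim MB MA (inv φ)

/-- isomorphism of fuzzy automata -/
def IsIso (MA : FuzzyAutomaton L X A) (MB : FuzzyAutomaton L X B) (h : A → B) : Prop :=
  Function.Bijective h ∧
  (∀ (a₁ : A) (x : X) (a₂ : A), MA.δ a₁ x a₂ = MB.δ (h a₁) x (h a₂)) ∧
  (∀ a, MA.σ a = MB.σ (h a)) ∧
  (∀ a, MA.τ a = MB.τ (h a))

/-- the factor fuzzy automaton `𝓐/E` -/
noncomputable def factorAut (M : FuzzyAutomaton L X A) (E : A → A → L) :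
    FuzzyAutomaton L X (FactorSet E) where
  δ := fun c x c' => rcomp (rcomp E (M.δx x)) E (rep c) (rep c')
  σ := fun c => scomp M.σ E (rep c)
  τ := fun c => rscomp E M.τ (rep c)

/-- the natural fuzzy relation `φ(a₁, E_{a₂}) = E(a₁,a₂)` between `A` and `A/E` -/
def natRel (E : A → A → L) : A → FactorSet E → L := fun a c => c.1 a

/-- the fuzzy relation `G/E` on `A/E` -/
noncomputable def quotRel (E G : A → A → L) : FactorSet E → FactorSet E → L :=
  fun c c' => G (rep c) (rep c')

/-- the fuzzy relation `φ(a₁, E_{a₂}) = G(a₁,a₂)` between `A` and `A/E` -/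
noncomputable def quotNatRel (E G : A → A → L) : A → FactorSet E → L :=
  fun a c => G a (rep c)

/-- UFB-equivalence of fuzzy automata -/
def UFBEquiv (MA : FuzzyAutomaton L X A) (MB : FuzzyAutomaton L X B) : Prop :=
  ∃ φ : A → B → L, IsUniform φ ∧ IsForwardBisim MA MB φ

/-! ### Auxiliary lemmas -/

section AuxLattice

open CompleteResiduatedLattice

lemma crl_le_one (x : L) : x ≤ 1 := by
  rw [CompleteResiduatedLattice.one_eq_top]; exact le_top

lemma crl_eq_one {x : L} (h : 1 ≤ x) : x = 1 := le_antisymm (crl_le_one x) h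

lemma le_res_iff {x y z : L} : x ≤ res y z ↔ x * y ≤ z :=
  (CompleteResiduatedLattice.adjunction x y z).symm

lemma res_mul_le (x y : L) : res x y * x ≤ y := le_res_iff.1 le_rfl

lemma crl_mul_le_mul {a b c d : L} (h1 : a ≤ b) (h2 : c ≤ d) : a * c ≤ b * d := by
  have h3 : a * c ≤ b * c := le_res_iff.1 (h1.trans (le_res_iff.2 le_rfl))
  have h4 : c * b ≤ d * b := le_res_iff.1 (h2.trans (le_res_iff.2 le_rfl))
  calc a * c ≤ b * c := h3
    _ = c * b := mul_comm _ _
    _ ≤ d * b := h4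
    _ = b * d := mul_comm _ _

lemma crl_iSup_mul {ι : Sort*} (f : ι → L) (x : L) : (⨆ i, f i) * x = ⨆ i, f i * x := by
  apply le_antisymm
  · exact le_res_iff.1 (iSup_le fun i => le_res_iff.2 (le_iSup (fun i => f i * x) i))
  · exact iSup_le fun i => crl_mul_le_mul (le_iSup f i) le_rfl

lemma crl_mul_iSup {ι : Sort*} (x : L) (f : ι → L) : (x * ⨆ i, f i) = ⨆ i, x * f i := by
  rw [mul_comm, crl_iSup_mul]
  exact iSup_congr fun i => mul_comm _ _

lemma res_self (x : L) : res x x = 1 :=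
  crl_eq_one (le_res_iff.2 (le_of_eq (one_mul x)))

lemma bires_refl (x : L) : bires x x = 1 := by
  rw [bires, res_self, inf_idem]

lemma bires_symm (x y : L) : bires x y = bires y x := inf_comm _ _

lemma bires_mul_le_left {x y : L} : bires x y * x ≤ y :=
  (crl_mul_le_mul inf_le_left le_rfl).trans (res_mul_le x y)

lemma bires_mul_le_right {x y : L} : bires x y * y ≤ x :=
  (crl_mul_le_mul inf_le_right le_rfl).trans (res_mul_le y x)

lemma le_bires {z x y : L} (h1 : z * x ≤ y) (h2 : z * y ≤ x) : z ≤ bires x y :=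
  le_inf (le_res_iff.2 h1) (le_res_iff.2 h2)

lemma bires_one_le (y : L) : bires 1 y ≤ y := by
  have h := bires_mul_le_left (x := (1:L)) (y := y)
  rwa [mul_one] at h

lemma bires_one_le' (x : L) : bires x 1 ≤ x := by
  have h := bires_mul_le_right (x := x) (y := (1:L))
  rwa [mul_one] at h

lemma bires_trans_le {x y z : L} : bires x y * bires y z ≤ bires x z := by
  refine le_bires ?_ ?_
  · calc bires x y * bires y z * x = bires y z * (bires x y * x) := by
          rw [mul_comm (bires x y) (bires y z), mul_assoc]
      _ ≤ bires y z * y := crl_mul_le_mul le_rfl bires_mul_le_left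
      _ ≤ z := bires_mul_le_left
  · calc bires x y * bires y z * z = bires x y * (bires y z * z) := mul_assoc _ _ _
      _ ≤ bires x y * y := crl_mul_le_mul le_rfl bires_mul_le_right
      _ ≤ x := bires_mul_le_right

end AuxLattice

section AuxComp

lemma inv_inv (φ : A → B → L) : inv (inv φ) = φ := rfl

lemma rcomp_mono {φ φ' : A → B → L} {ψ ψ' : B → C → L} (h1 : φ ≤ φ') (h2 : ψ ≤ ψ') :
    rcomp φ ψ ≤ rcomp φ' ψ' := by
  intro a c
  exact iSup_le fun b => (crl_mul_le_mul (h1 a b) (h2 b c)).trans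
    (le_iSup (fun b => φ' a b * ψ' b c) b)

lemma scomp_mono {f f' : A → L} {φ φ' : A → B → L} (h1 : f ≤ f') (h2 : φ ≤ φ') :
    scomp f φ ≤ scomp f' φ' := by
  intro b
  exact iSup_le fun a => (crl_mul_le_mul (h1 a) (h2 a b)).trans
    (le_iSup (fun a => f' a * φ' a b) a)

lemma rscomp_mono {φ φ' : A → B → L} {g g' : B → L} (h1 : φ ≤ φ') (h2 : g ≤ g') :
    rscomp φ g ≤ rscomp φ' g' := by
  intro a
  exact iSup_le fun b => (crl_mul_le_mul (h1 a b) (h2 b)).trans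
    (le_iSup (fun b => φ' a b * g' b) b)

lemma rcomp_assoc {D : Type*} (φ : A → B → L) (ψ : B → C → L) (θ : C → D → L) :
    rcomp (rcomp φ ψ) θ = rcomp φ (rcomp ψ θ) := by
  funext a d
  simp only [rcomp, crl_iSup_mul, crl_mul_iSup, mul_assoc]
  exact iSup_comm

lemma scomp_assoc (f : A → L) (φ : A → B → L) (ψ : B → C → L) :
    scomp f (rcomp φ ψ) = scomp (scomp f φ) ψ := by
  funext c
  simp only [scomp, rcomp, crl_iSup_mul, crl_mul_iSup, mul_assoc]
  exact iSup_comm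

lemma rscomp_assoc (φ : A → B → L) (ψ : B → C → L) (g : C → L) :
    rscomp (rcomp φ ψ) g = rscomp φ (rscomp ψ g) := by
  funext a
  simp only [rscomp, rcomp, crl_iSup_mul, crl_mul_iSup, mul_assoc]
  exact iSup_comm

end AuxComp

set_option linter.unusedSectionVars false

section AuxKer

lemma ker_refl (φ : A → B → L) (a : A) : ker φ a a = 1 :=
  crl_eq_one (le_iInf fun b => le_of_eq (bires_refl _).symm)

lemma coker_refl (φ : A → B → L) (b : B) : coker φ b b = 1 :=
  crl_eq_one (le_iInf fun a => le_of_eq (bires_refl _).symm)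

lemma ker_symm (φ : A → B → L) (a a' : A) : ker φ a a' = ker φ a' a :=
  iInf_congr fun b => bires_symm _ _

lemma coker_symm (φ : A → B → L) (b b' : B) : coker φ b b' = coker φ b' b :=
  iInf_congr fun a => bires_symm _ _

lemma ker_trans (φ : A → B → L) (a₁ a₂ a₃ : A) :
    ker φ a₁ a₂ * ker φ a₂ a₃ ≤ ker φ a₁ a₃ :=
  le_iInf fun b => (crl_mul_le_mul (iInf_le _ b) (iInf_le _ b)).trans bires_trans_le

lemma coker_trans (φ : A → B → L) (b₁ b₂ b₃ : B) :
    coker φ b₁ b₂ * coker φ b₂ b₃ ≤ coker φ b₁ b₃ :=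
  le_iInf fun a => (crl_mul_le_mul (iInf_le _ a) (iInf_le _ a)).trans bires_trans_le

lemma ker_mul_le {φ : A → B → L} (a a' : A) (b : B) : ker φ a a' * φ a' b ≤ φ a b :=
  (crl_mul_le_mul (iInf_le _ b) le_rfl).trans bires_mul_le_right

lemma coker_mul_le {φ : A → B → L} (b b' : B) (a : A) : coker φ b b' * φ a b' ≤ φ a b :=
  (crl_mul_le_mul (iInf_le _ a) le_rfl).trans bires_mul_le_right

lemma ker_class_eq {φ : A → B → L} {a a' : A} (h : ker φ a a' = 1) :
    ker φ a = ker φ a' := by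
  funext c
  apply le_antisymm
  · have h2 := ker_trans φ a' a c
    rw [ker_symm φ a' a, h, one_mul] at h2
    exact h2
  · have h2 := ker_trans φ a a' c
    rw [h, one_mul] at h2
    exact h2

lemma coker_class_eq {φ : A → B → L} {b b' : B} (h : coker φ b b' = 1) :
    coker φ b = coker φ b' := by
  funext c
  apply le_antisymm
  · have h2 := coker_trans φ b' b c
    rw [coker_symm φ b' b, h, one_mul] at h2
    exact h2
  · have h2 := coker_trans φ b b' c
    rw [h, one_mul] at h2
    exact h2

lemma inv_ker (φ : A → B → L) : inv (ker φ) = ker φ :=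
  funext fun a => funext fun a' => ker_symm φ a' a

lemma inv_coker (φ : A → B → L) : inv (coker φ) = coker φ :=
  funext fun b => funext fun b' => coker_symm φ b' b

end AuxKer

section AuxUniform

variable {φ : A → B → L}

lemma pff3 (hp : IsPFF φ) (a a' : A) (b b' : B) :
    φ a b * φ a' b * φ a' b' ≤ φ a b' := by
  have h := hp a b'
  simp only [rcomp, inv] at h
  refine le_trans ?_ h
  calc φ a b * φ a' b * φ a' b'
      ≤ (⨆ c, φ a c * φ a' c) * φ a' b' :=
        crl_mul_le_mul (le_iSup (fun c => φ a c * φ a' c) b) le_rfl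
    _ ≤ ⨆ a'', (⨆ c, φ a c * φ a'' c) * φ a'' b' :=
        le_iSup (fun a'' => (⨆ c, φ a c * φ a'' c) * φ a'' b') a'

lemma crisp_spec [Nonempty B] (hL : IsLFun φ) (a : A) : φ a (crispDesc φ a) = 1 := by
  have h : ∃ b, φ a b = 1 := hL a
  rw [crispDesc, dif_pos h]
  exact h.choose_spec

lemma comp_le_ker (hp : IsPFF φ) (a a' : A) (b : B) : φ a b * φ a' b ≤ ker φ a a' := by
  refine le_iInf fun d => le_bires ?_ ?_
  · rw [mul_comm (φ a b) (φ a' b)]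
    exact pff3 hp a' a b d
  · exact pff3 hp a a' b d

lemma comp_le_coker (hp : IsPFF φ) (a : A) (b b' : B) : φ a b * φ a b' ≤ coker φ b b' := by
  refine le_iInf fun a' => le_bires ?_ ?_
  · rw [mul_comm, ← mul_assoc]
    exact pff3 hp a' a b b'
  · rw [mul_comm, mul_comm (φ a b) (φ a b'), ← mul_assoc]
    exact pff3 hp a' a b' b

lemma ker_eq_comp [Nonempty B] (hu : IsUniform φ) : ker φ = rcomp φ (inv φ) := by
  funext a a'
  apply le_antisymm
  · obtain ⟨b, hb⟩ := hu.2.1 a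
    have h1 : ker φ a a' ≤ φ a' b := by
      have h2 := iInf_le (fun b => bires (φ a b) (φ a' b)) b
      rw [hb] at h2
      exact h2.trans (bires_one_le _)
    calc ker φ a a' = φ a b * ker φ a a' := by rw [hb, one_mul]
      _ ≤ φ a b * φ a' b := crl_mul_le_mul le_rfl h1
      _ ≤ ⨆ c, φ a c * inv φ c a' := le_iSup (fun c => φ a c * inv φ c a') b
  · exact iSup_le fun b => comp_le_ker hu.1 a a' b

lemma coker_eq_comp (hu : IsUniform φ) : coker φ = rcomp (inv φ) φ := by
  funext b b'
  apply le_antisymm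
  · obtain ⟨a, ha⟩ := hu.2.2 b
    have h1 : coker φ b b' ≤ φ a b' := by
      have h2 := iInf_le (fun a => bires (φ a b) (φ a b')) a
      rw [ha] at h2
      exact h2.trans (bires_one_le _)
    calc coker φ b b' = φ a b * coker φ b b' := by rw [ha, one_mul]
      _ ≤ φ a b * φ a b' := crl_mul_le_mul le_rfl h1
      _ ≤ ⨆ a', inv φ b a' * φ a' b' := le_iSup (fun a' => inv φ b a' * φ a' b') a
  · exact iSup_le fun a => comp_le_coker hu.1 a b b'

lemma key1 [Nonempty B] (hu : IsUniform φ) (a : A) (b : B) :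
    coker φ (crispDesc φ a) b = φ a b := by
  have hψ := crisp_spec hu.2.1 a
  apply le_antisymm
  · refine (iInf_le (fun a' => bires (φ a' (crispDesc φ a)) (φ a' b)) a).trans ?_
    rw [hψ]
    exact bires_one_le _
  · refine le_iInf fun a' => le_bires ?_ ?_
    · have h := pff3 hu.1 a' a (crispDesc φ a) b
      rw [hψ, mul_one] at h
      rw [mul_comm]
      exact h
    · have h := pff3 hu.1 a' a b (crispDesc φ a)
      rw [hψ, mul_one] at h
      rw [mul_comm]
      exact h

lemma key2 [Nonempty B] (hu : IsUniform φ) (a₁ a₂ : A) :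
    ker φ a₁ a₂ = φ a₁ (crispDesc φ a₂) := by
  have hψ := crisp_spec hu.2.1 a₂
  apply le_antisymm
  · refine (iInf_le (fun b => bires (φ a₁ b) (φ a₂ b)) (crispDesc φ a₂)).trans ?_
    rw [hψ]
    exact bires_one_le' _
  · refine le_iInf fun b => le_bires ?_ ?_
    · have h := pff3 hu.1 a₂ a₁ (crispDesc φ a₂) b
      rw [hψ, one_mul] at h
      exact h
    · have h := pff3 hu.1 a₁ a₂ (crispDesc φ a₂) b
      rw [hψ, mul_one] at h
      exact h

lemma key2' [Nonempty B] (hu : IsUniform φ) (a₁ a₂ : A) :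
    coker φ (crispDesc φ a₁) (crispDesc φ a₂) = ker φ a₁ a₂ := by
  rw [key1 hu, key2 hu]

lemma key3 (hp : IsPFF φ) {a' : A} {b : B} (h : φ a' b = 1) (a : A) :
    φ a b = ker φ a a' := by
  apply le_antisymm
  · refine le_iInf fun d => le_bires ?_ ?_
    · have h2 := pff3 hp a' a b d
      rw [h, one_mul] at h2
      exact h2
    · have h2 := pff3 hp a a' b d
      rw [h, mul_one] at h2
      exact h2
  · refine (iInf_le (fun d => bires (φ a d) (φ a' d)) b).trans ?_
    rw [h]
    exact bires_one_le' _

lemma comp_inv_comp [Nonempty B] (hu : IsUniform φ) : rcomp (rcomp φ (inv φ)) φ = φ := by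
  apply le_antisymm hu.1
  intro a b
  obtain ⟨bb, hbb⟩ := hu.2.1 a
  calc φ a b = (φ a bb * φ a bb) * φ a b := by rw [hbb, one_mul, one_mul]
    _ ≤ (⨆ c, φ a c * inv φ c a) * φ a b :=
        crl_mul_le_mul (le_iSup (fun c => φ a c * inv φ c a) bb) le_rfl
    _ ≤ ⨆ a', (⨆ c, φ a c * inv φ c a') * φ a' b :=
        le_iSup (fun a' => (⨆ c, φ a c * inv φ c a') * φ a' b) a

lemma inv_comp_inv (hu : IsUniform φ) : rcomp (rcomp (inv φ) φ) (inv φ) = inv φ := by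
  apply le_antisymm
  · intro b a
    refine iSup_le fun b' => ?_
    simp only [rcomp, inv]
    rw [crl_iSup_mul]
    refine iSup_le fun a' => ?_
    show φ a' b * φ a' b' * φ a b' ≤ φ a b
    have h := pff3 hu.1 a a' b' b
    calc φ a' b * φ a' b' * φ a b' = φ a b' * φ a' b' * φ a' b := by
          rw [mul_comm (φ a' b) (φ a' b'), mul_assoc, mul_comm (φ a' b) (φ a b'),
            ← mul_assoc, mul_comm (φ a' b') (φ a b')]
      _ ≤ φ a b := h
  · intro b a
    obtain ⟨a₀, ha₀⟩ := hu.2.2 b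
    calc inv φ b a = (φ a₀ b * φ a₀ b) * φ a b := by rw [ha₀, one_mul, one_mul]; rfl
      _ ≤ (⨆ a', inv φ b a' * φ a' b) * inv φ b a :=
        crl_mul_le_mul (le_iSup (fun a' => inv φ b a' * φ a' b) a₀) le_rfl
      _ ≤ ⨆ b', (⨆ a', inv φ b a' * φ a' b') * inv φ b' a :=
        le_iSup (fun b' => (⨆ a', inv φ b a' * φ a' b') * inv φ b' a) b

end AuxUniform

section AuxFactor

lemma rep_spec {E : A → A → L} (c : FactorSet E) : E (rep c) = c.1 :=
  c.2.choose_spec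

lemma rep_toClass (E : A → A → L) (a : A) : E (rep (toClass E a)) = E a :=
  rep_spec (toClass E a)

lemma le_scomp_refl {f : A → L} {e : A → A → L} (hr : ∀ a, e a a = 1) :
    f ≤ scomp f e := by
  intro a
  calc f a = f a * e a a := by rw [hr a, mul_one]
    _ ≤ ⨆ a', f a' * e a' a := le_iSup (fun a' => f a' * e a' a) a

lemma le_rscomp_refl {g : A → L} {e : A → A → L} (hr : ∀ a, e a a = 1) :
    g ≤ rscomp e g := by
  intro a
  calc g a = e a a * g a := by rw [hr a, one_mul]
    _ ≤ ⨆ a', e a a' * g a' := le_iSup (fun a' => e a a' * g a') a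

lemma le_rcomp_refl_left {e : A → A → L} (hr : ∀ a, e a a = 1) (θ : A → C → L) :
    θ ≤ rcomp e θ := by
  intro a c
  calc θ a c = e a a * θ a c := by rw [hr a, one_mul]
    _ ≤ ⨆ z, e a z * θ z c := le_iSup (fun z => e a z * θ z c) a

lemma le_rcomp_refl_right {e : A → A → L} (hr : ∀ a, e a a = 1) (θ : C → A → L) :
    θ ≤ rcomp θ e := by
  intro c a
  calc θ c a = θ c a * e a a := by rw [hr a, mul_one]
    _ ≤ ⨆ z, θ c z * e z a := le_iSup (fun z => θ c z * e z a) a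

lemma comp_self_le {e : A → A → L} (ht : ∀ x y z, e x y * e y z ≤ e x z) :
    rcomp e e ≤ e := by
  intro a c
  exact iSup_le fun b => ht a b c

lemma absorb_rcomp {e : A → A → L} (hs : ∀ x y, e x y = e y x)
    (ht : ∀ x y z, e x y * e y z ≤ e x z) (θ : A → C → L) (y b : A) (c : C) :
    e y b * rcomp e θ y c ≤ rcomp e θ b c := by
  simp only [rcomp, crl_mul_iSup]
  refine iSup_le fun z => ?_
  calc e y b * (e y z * θ z c) = (e b y * e y z) * θ z c := by rw [hs y b, mul_assoc]
    _ ≤ e b z * θ z c := crl_mul_le_mul (ht b y z) le_rfl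
    _ ≤ ⨆ z', e b z' * θ z' c := le_iSup (fun z' => e b z' * θ z' c) z

lemma absorb_rscomp {e : A → A → L} (hs : ∀ x y, e x y = e y x)
    (ht : ∀ x y z, e x y * e y z ≤ e x z) (g : A → L) (y b : A) :
    e y b * rscomp e g y ≤ rscomp e g b := by
  simp only [rscomp, crl_mul_iSup]
  refine iSup_le fun z => ?_
  calc e y b * (e y z * g z) = (e b y * e y z) * g z := by rw [hs y b, mul_assoc]
    _ ≤ e b z * g z := crl_mul_le_mul (ht b y z) le_rfl
    _ ≤ ⨆ z', e b z' * g z' := le_iSup (fun z' => e b z' * g z') z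

lemma scomp_class_congr {e : A → A → L} (hs : ∀ x y, e x y = e y x) {a₁ a₂ : A}
    (h : e a₁ = e a₂) (f : A → L) : scomp f e a₁ = scomp f e a₂ := by
  have h' : ∀ c, e c a₁ = e c a₂ := fun c => by rw [hs c a₁, h, hs a₂ c]
  simp only [scomp, h']

lemma rscomp_class_congr {e : A → A → L} {a₁ a₂ : A}
    (h : e a₁ = e a₂) (g : A → L) : rscomp e g a₁ = rscomp e g a₂ := by
  simp only [rscomp, h]

lemma rcomp_class_congr {e θ : A → A → L} (hs : ∀ x y, e x y = e y x) {a₁ a₂ b₁ b₂ : A}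
    (h1 : e a₁ = e a₂) (h2 : e b₁ = e b₂) :
    rcomp (rcomp e θ) e a₁ b₁ = rcomp (rcomp e θ) e a₂ b₂ := by
  have h2' : ∀ c, e c b₁ = e c b₂ := fun c => by rw [hs c b₁, h2, hs b₂ c]
  simp only [rcomp, h1, h2']

end AuxFactor

section AuxTilde

variable [Nonempty B] {φ : A → B → L}

lemma F_rep_tilde (c : FactorSet (ker φ)) :
    coker φ (rep (tilde φ c)) = coker φ (crispDesc φ (rep c)) :=
  rep_spec (tilde φ c)

lemma F_psi_congr (hu : IsUniform φ) {a a' : A} (h : ker φ a a' = 1) :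
    coker φ (crispDesc φ a) = coker φ (crispDesc φ a') :=
  coker_class_eq (by rw [key2' hu]; exact h)

lemma ker_rep_toClass_eq_one (φ : A → B → L) (a : A) :
    ker φ (rep (toClass (ker φ) a)) a = 1 :=
  (congrFun (rep_toClass (ker φ) a) a).trans (ker_refl φ a)

lemma tilde_class_eq (hu : IsUniform φ) (a : A) :
    coker φ (rep (tilde φ (toClass (ker φ) a))) = coker φ (crispDesc φ a) :=
  (F_rep_tilde _).trans (F_psi_congr hu (ker_rep_toClass_eq_one φ a))

lemma coker_comp_at_psi (hu : IsUniform φ) (θ : B → B → L) (a a' : A) :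
    rcomp (rcomp (coker φ) θ) (coker φ) (crispDesc φ a) (crispDesc φ a') =
      rcomp (rcomp φ θ) (inv φ) a a' := by
  have h1 : ∀ x, coker φ (crispDesc φ a) x = φ a x := key1 hu a
  have h2 : ∀ x, coker φ x (crispDesc φ a') = φ a' x := fun x => by
    rw [coker_symm, key1 hu]
  simp only [rcomp, inv, h1, h2]

lemma coker_scomp_at_psi (hu : IsUniform φ) (g : B → L) (a : A) :
    scomp g (coker φ) (crispDesc φ a) = scomp g (inv φ) a := by
  have h2 : ∀ x, coker φ x (crispDesc φ a) = φ a x := fun x => by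
    rw [coker_symm, key1 hu]
  simp only [scomp, inv, h2]

lemma coker_rscomp_at_psi (hu : IsUniform φ) (g : B → L) (a : A) :
    rscomp (coker φ) g (crispDesc φ a) = rscomp φ g a := by
  have h1 : ∀ x, coker φ (crispDesc φ a) x = φ a x := key1 hu a
  simp only [rscomp, h1]

lemma tilde_injective (hu : IsUniform φ) : Function.Injective (tilde φ) := by
  intro c c' h
  have h1 : coker φ (crispDesc φ (rep c)) = coker φ (crispDesc φ (rep c')) :=
    congrArg Subtype.val h
  have h2 : ker φ (rep c) (rep c') = 1 := by
    rw [← key2' hu, congrFun h1 (crispDesc φ (rep c'))]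
    exact coker_refl φ _
  apply Subtype.ext
  rw [← rep_spec c, ← rep_spec c', ker_class_eq h2]

lemma tilde_surjective (hu : IsUniform φ) : Function.Surjective (tilde φ) := by
  intro d
  obtain ⟨a, ha⟩ := hu.2.2 (rep d)
  refine ⟨toClass (ker φ) a, ?_⟩
  apply Subtype.ext
  show coker φ (crispDesc φ (rep (toClass (ker φ) a))) = d.1
  have h1 : coker φ (crispDesc φ (rep (toClass (ker φ) a))) = coker φ (crispDesc φ a) :=
    F_psi_congr hu (ker_rep_toClass_eq_one φ a)
  have h2 : coker φ (crispDesc φ a) = coker φ (rep d) :=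
    coker_class_eq (by rw [key1 hu]; exact ha)
  rw [h1, h2, rep_spec d]

end AuxTilde

section AuxForward

variable [Nonempty B] {MA : FuzzyAutomaton L X A} {MB : FuzzyAutomaton L X B}
  {φ : A → B → L}

lemma Idelta (hu : IsUniform φ) (hfb : IsForwardBisim MA MB φ) (x : X) :
    rcomp (rcomp (ker φ) (MA.δx x)) (ker φ) = rcomp (rcomp φ (MB.δx x)) (inv φ) := by
  have h2 : ∀ x, rcomp (inv φ) (MA.δx x) ≤ rcomp (MB.δx x) (inv φ) := hfb.1.2.1
  have g2 : ∀ x, rcomp φ (MB.δx x) ≤ rcomp (MA.δx x) φ := hfb.2.2.1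
  rw [ker_eq_comp hu]
  apply le_antisymm
  · calc rcomp (rcomp (rcomp φ (inv φ)) (MA.δx x)) (rcomp φ (inv φ))
        = rcomp (rcomp φ (rcomp (inv φ) (MA.δx x))) (rcomp φ (inv φ)) := by
          rw [rcomp_assoc φ (inv φ) (MA.δx x)]
      _ = rcomp φ (rcomp (rcomp (inv φ) (MA.δx x)) (rcomp φ (inv φ))) :=
          rcomp_assoc φ (rcomp (inv φ) (MA.δx x)) (rcomp φ (inv φ))
      _ ≤ rcomp φ (rcomp (rcomp (MB.δx x) (inv φ)) (rcomp φ (inv φ))) :=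
          rcomp_mono le_rfl (rcomp_mono (h2 x) le_rfl)
      _ = rcomp φ (rcomp (MB.δx x) (rcomp (inv φ) (rcomp φ (inv φ)))) := by
          rw [rcomp_assoc (MB.δx x) (inv φ) (rcomp φ (inv φ))]
      _ = rcomp φ (rcomp (MB.δx x) (inv φ)) := by
          rw [← rcomp_assoc (inv φ) φ (inv φ), inv_comp_inv hu]
      _ = rcomp (rcomp φ (MB.δx x)) (inv φ) := (rcomp_assoc φ (MB.δx x) (inv φ)).symm
  · calc rcomp (rcomp φ (MB.δx x)) (inv φ)
        = rcomp (rcomp (rcomp (rcomp φ (inv φ)) φ) (MB.δx x)) (inv φ) := by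
          rw [comp_inv_comp hu]
      _ = rcomp (rcomp (rcomp φ (inv φ)) (rcomp φ (MB.δx x))) (inv φ) := by
          rw [rcomp_assoc (rcomp φ (inv φ)) φ (MB.δx x)]
      _ ≤ rcomp (rcomp (rcomp φ (inv φ)) (rcomp (MA.δx x) φ)) (inv φ) :=
          rcomp_mono (rcomp_mono le_rfl (g2 x)) le_rfl
      _ = rcomp (rcomp φ (inv φ)) (rcomp (rcomp (MA.δx x) φ) (inv φ)) :=
          rcomp_assoc (rcomp φ (inv φ)) (rcomp (MA.δx x) φ) (inv φ)
      _ = rcomp (rcomp φ (inv φ)) (rcomp (MA.δx x) (rcomp φ (inv φ))) := by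
          rw [rcomp_assoc (MA.δx x) φ (inv φ)]
      _ = rcomp (rcomp (rcomp φ (inv φ)) (MA.δx x)) (rcomp φ (inv φ)) :=
          (rcomp_assoc (rcomp φ (inv φ)) (MA.δx x) (rcomp φ (inv φ))).symm

lemma Isigma (hu : IsUniform φ) (hfb : IsForwardBisim MA MB φ) :
    scomp MA.σ (ker φ) = scomp MB.σ (inv φ) := by
  have h1 : MA.σ ≤ scomp MB.σ (inv φ) := hfb.1.1
  have g1 : MB.σ ≤ scomp MA.σ φ := hfb.2.1
  rw [ker_eq_comp hu, scomp_assoc MA.σ φ (inv φ)]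
  apply le_antisymm
  · calc scomp (scomp MA.σ φ) (inv φ)
        ≤ scomp (scomp (scomp MB.σ (inv φ)) φ) (inv φ) :=
          scomp_mono (scomp_mono h1 le_rfl) le_rfl
      _ = scomp MB.σ (rcomp (rcomp (inv φ) φ) (inv φ)) := by
          rw [← scomp_assoc MB.σ (inv φ) φ, ← scomp_assoc MB.σ (rcomp (inv φ) φ) (inv φ)]
      _ = scomp MB.σ (inv φ) := by rw [inv_comp_inv hu]
  · exact scomp_mono g1 le_rfl

lemma Itau (hu : IsUniform φ) (hfb : IsForwardBisim MA MB φ) :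
    rscomp (ker φ) MA.τ = rscomp φ MB.τ := by
  have h3 : rscomp (inv φ) MA.τ ≤ MB.τ := hfb.1.2.2
  have g3 : rscomp φ MB.τ ≤ MA.τ := hfb.2.2.2
  rw [ker_eq_comp hu, rscomp_assoc φ (inv φ) MA.τ]
  apply le_antisymm
  · exact rscomp_mono le_rfl h3
  · calc rscomp φ MB.τ
        = rscomp (rcomp (rcomp φ (inv φ)) φ) MB.τ := by rw [comp_inv_comp hu]
      _ = rscomp (rcomp φ (inv φ)) (rscomp φ MB.τ) := rscomp_assoc (rcomp φ (inv φ)) φ MB.τ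
      _ ≤ rscomp (rcomp φ (inv φ)) MA.τ := rscomp_mono le_rfl g3
      _ = rscomp φ (rscomp (inv φ) MA.τ) := rscomp_assoc φ (inv φ) MA.τ

lemma kerDelta (hu : IsUniform φ) (hfb : IsForwardBisim MA MB φ) (x : X) :
    rcomp (ker φ) (MA.δx x) ≤ rcomp (MA.δx x) (ker φ) := by
  have h2 : ∀ x, rcomp (inv φ) (MA.δx x) ≤ rcomp (MB.δx x) (inv φ) := hfb.1.2.1
  have g2 : ∀ x, rcomp φ (MB.δx x) ≤ rcomp (MA.δx x) φ := hfb.2.2.1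
  rw [ker_eq_comp hu]
  calc rcomp (rcomp φ (inv φ)) (MA.δx x)
      = rcomp φ (rcomp (inv φ) (MA.δx x)) := rcomp_assoc φ (inv φ) (MA.δx x)
    _ ≤ rcomp φ (rcomp (MB.δx x) (inv φ)) := rcomp_mono le_rfl (h2 x)
    _ = rcomp (rcomp φ (MB.δx x)) (inv φ) := (rcomp_assoc φ (MB.δx x) (inv φ)).symm
    _ ≤ rcomp (rcomp (MA.δx x) φ) (inv φ) := rcomp_mono (g2 x) le_rfl
    _ = rcomp (MA.δx x) (rcomp φ (inv φ)) := rcomp_assoc (MA.δx x) φ (inv φ)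

lemma cokerDelta (hu : IsUniform φ) (hfb : IsForwardBisim MA MB φ) (x : X) :
    rcomp (coker φ) (MB.δx x) ≤ rcomp (MB.δx x) (coker φ) := by
  have h2 : ∀ x, rcomp (inv φ) (MA.δx x) ≤ rcomp (MB.δx x) (inv φ) := hfb.1.2.1
  have g2 : ∀ x, rcomp φ (MB.δx x) ≤ rcomp (MA.δx x) φ := hfb.2.2.1
  rw [coker_eq_comp hu]
  calc rcomp (rcomp (inv φ) φ) (MB.δx x)
      = rcomp (inv φ) (rcomp φ (MB.δx x)) := rcomp_assoc (inv φ) φ (MB.δx x)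
    _ ≤ rcomp (inv φ) (rcomp (MA.δx x) φ) := rcomp_mono le_rfl (g2 x)
    _ = rcomp (rcomp (inv φ) (MA.δx x)) φ := (rcomp_assoc (inv φ) (MA.δx x) φ).symm
    _ ≤ rcomp (rcomp (MB.δx x) (inv φ)) φ := rcomp_mono (h2 x) le_rfl
    _ = rcomp (MB.δx x) (rcomp (inv φ) φ) := rcomp_assoc (MB.δx x) (inv φ) φ

lemma kerTau (hu : IsUniform φ) (hfb : IsForwardBisim MA MB φ) :
    rscomp (ker φ) MA.τ ≤ MA.τ := by
  rw [Itau hu hfb]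
  exact hfb.2.2.2

lemma cokerTau (hu : IsUniform φ) (hfb : IsForwardBisim MA MB φ) :
    rscomp (coker φ) MB.τ ≤ MB.τ := by
  have h3 : rscomp (inv φ) MA.τ ≤ MB.τ := hfb.1.2.2
  have g3 : rscomp φ MB.τ ≤ MA.τ := hfb.2.2.2
  rw [coker_eq_comp hu, rscomp_assoc (inv φ) φ MB.τ]
  calc rscomp (inv φ) (rscomp φ MB.τ) ≤ rscomp (inv φ) MA.τ := rscomp_mono le_rfl g3
    _ ≤ MB.τ := h3

end AuxForward

/-- uniform forward bisimulations via factor automata -/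
theorem uniform_forwardBisim_iff_factor {L X A B : Type*} [CompleteResiduatedLattice L]
    [Nonempty A] [Nonempty B]
    (MA : FuzzyAutomaton L X A) (MB : FuzzyAutomaton L X B)
    (φ : A → B → L) (hu : IsUniform φ) :
    IsForwardBisim MA MB φ ↔
      (IsForwardBisim MA MA (ker φ) ∧
       IsForwardBisim MB MB (coker φ) ∧
       IsIso (factorAut MA (ker φ)) (factorAut MB (coker φ)) (tilde φ)) := by
  constructor
  · intro hfb
    refine ⟨?_, ?_, ?_⟩
    · have sim : IsForwardSim MA MA (ker φ) := by
        refine ⟨?_, ?_, ?_⟩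
        · rw [inv_ker φ]; exact le_scomp_refl (ker_refl φ)
        · intro x; rw [inv_ker φ]; exact kerDelta hu hfb x
        · rw [inv_ker φ]; exact kerTau hu hfb
      exact ⟨sim, by rw [inv_ker φ]; exact sim⟩
    · have sim : IsForwardSim MB MB (coker φ) := by
        refine ⟨?_, ?_, ?_⟩
        · rw [inv_coker φ]; exact le_scomp_refl (coker_refl φ)
        · intro x; rw [inv_coker φ]; exact cokerDelta hu hfb x
        · rw [inv_coker φ]; exact cokerTau hu hfb
      exact ⟨sim, by rw [inv_coker φ]; exact sim⟩
    · refine ⟨⟨tilde_injective hu, tilde_surjective hu⟩, ?_, ?_, ?_⟩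
      · intro c x c'
        show rcomp (rcomp (ker φ) (MA.δx x)) (ker φ) (rep c) (rep c') =
          rcomp (rcomp (coker φ) (MB.δx x)) (coker φ) (rep (tilde φ c)) (rep (tilde φ c'))
        rw [rcomp_class_congr (coker_symm φ) (F_rep_tilde c) (F_rep_tilde c'),
          coker_comp_at_psi hu, Idelta hu hfb x]
      · intro c
        show scomp MA.σ (ker φ) (rep c) = scomp MB.σ (coker φ) (rep (tilde φ c))
        rw [scomp_class_congr (coker_symm φ) (F_rep_tilde c) MB.σ,
          coker_scomp_at_psi hu, Isigma hu hfb]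
      · intro c
        show rscomp (ker φ) MA.τ (rep c) = rscomp (coker φ) MB.τ (rep (tilde φ c))
        rw [rscomp_class_congr (F_rep_tilde c) MB.τ, coker_rscomp_at_psi hu, Itau hu hfb]
  · rintro ⟨hEb, hFb, hiso⟩
    obtain ⟨_, hδ, hσ, hτ⟩ := hiso
    have e2 : ∀ x, rcomp (ker φ) (MA.δx x) ≤ rcomp (MA.δx x) (ker φ) := by
      have h := hEb.1.2.1; rwa [inv_ker φ] at h
    have e3 : rscomp (ker φ) MA.τ ≤ MA.τ := by
      have h := hEb.1.2.2; rwa [inv_ker φ] at h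
    have f2 : ∀ x, rcomp (coker φ) (MB.δx x) ≤ rcomp (MB.δx x) (coker φ) := by
      have h := hFb.1.2.1; rwa [inv_coker φ] at h
    have f3 : rscomp (coker φ) MB.τ ≤ MB.τ := by
      have h := hFb.1.2.2; rwa [inv_coker φ] at h
    have Iδ : ∀ (x : X) (a a' : A),
        rcomp (rcomp (ker φ) (MA.δx x)) (ker φ) a a' =
          rcomp (rcomp (coker φ) (MB.δx x)) (coker φ) (crispDesc φ a) (crispDesc φ a') := by
      intro x a a'
      have h : rcomp (rcomp (ker φ) (MA.δx x)) (ker φ) (rep (toClass (ker φ) a))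
            (rep (toClass (ker φ) a')) =
          rcomp (rcomp (coker φ) (MB.δx x)) (coker φ)
            (rep (tilde φ (toClass (ker φ) a))) (rep (tilde φ (toClass (ker φ) a'))) :=
        hδ (toClass (ker φ) a) x (toClass (ker φ) a')
      rwa [rcomp_class_congr (ker_symm φ) (rep_toClass (ker φ) a) (rep_toClass (ker φ) a'),
        rcomp_class_congr (coker_symm φ) (tilde_class_eq hu a) (tilde_class_eq hu a')] at h
    have Iσ : ∀ a, scomp MA.σ (ker φ) a = scomp MB.σ (coker φ) (crispDesc φ a) := by
      intro a
      have h : scomp MA.σ (ker φ) (rep (toClass (ker φ) a)) =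
          scomp MB.σ (coker φ) (rep (tilde φ (toClass (ker φ) a))) := hσ (toClass (ker φ) a)
      rwa [scomp_class_congr (ker_symm φ) (rep_toClass (ker φ) a) MA.σ,
        scomp_class_congr (coker_symm φ) (tilde_class_eq hu a) MB.σ] at h
    have Iτ : ∀ a, rscomp (ker φ) MA.τ a = rscomp (coker φ) MB.τ (crispDesc φ a) := by
      intro a
      have h : rscomp (ker φ) MA.τ (rep (toClass (ker φ) a)) =
          rscomp (coker φ) MB.τ (rep (tilde φ (toClass (ker φ) a))) := hτ (toClass (ker φ) a)
      rwa [rscomp_class_congr (rep_toClass (ker φ) a) MA.τ,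
        rscomp_class_congr (tilde_class_eq hu a) MB.τ] at h
    have hDle : ∀ x, MA.δx x ≤ rcomp (rcomp (ker φ) (MA.δx x)) (ker φ) := fun x =>
      (le_rcomp_refl_left (ker_refl φ) (MA.δx x)).trans
        (le_rcomp_refl_right (ker_refl φ) (rcomp (ker φ) (MA.δx x)))
    have hD'le : ∀ x, MB.δx x ≤ rcomp (rcomp (coker φ) (MB.δx x)) (coker φ) := fun x =>
      (le_rcomp_refl_left (coker_refl φ) (MB.δx x)).trans
        (le_rcomp_refl_right (coker_refl φ) (rcomp (coker φ) (MB.δx x)))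
    have c1 : MA.σ ≤ scomp MB.σ (inv φ) := by
      intro a
      calc MA.σ a ≤ scomp MA.σ (ker φ) a := le_scomp_refl (ker_refl φ) a
        _ = scomp MB.σ (coker φ) (crispDesc φ a) := Iσ a
        _ = scomp MB.σ (inv φ) a := coker_scomp_at_psi hu MB.σ a
    have c2 : ∀ x, rcomp (inv φ) (MA.δx x) ≤ rcomp (MB.δx x) (inv φ) := by
      intro x b a'
      refine iSup_le fun a => ?_
      show φ a b * MA.δx x a a' ≤ rcomp (MB.δx x) (inv φ) b a'
      calc φ a b * MA.δx x a a'
          ≤ φ a b * rcomp (rcomp (ker φ) (MA.δx x)) (ker φ) a a' :=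
            crl_mul_le_mul le_rfl (hDle x a a')
        _ = φ a b * rcomp (rcomp (coker φ) (MB.δx x)) (coker φ)
              (crispDesc φ a) (crispDesc φ a') := by rw [Iδ x a a']
        _ = coker φ (crispDesc φ a) b *
              rcomp (coker φ) (rcomp (MB.δx x) (coker φ)) (crispDesc φ a) (crispDesc φ a') := by
            rw [← key1 hu a b, rcomp_assoc (coker φ) (MB.δx x) (coker φ)]
        _ ≤ rcomp (coker φ) (rcomp (MB.δx x) (coker φ)) b (crispDesc φ a') :=
            absorb_rcomp (coker_symm φ) (coker_trans φ) _ (crispDesc φ a) b (crispDesc φ a')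
        _ = rcomp (rcomp (coker φ) (MB.δx x)) (coker φ) b (crispDesc φ a') := by
            rw [rcomp_assoc (coker φ) (MB.δx x) (coker φ)]
        _ ≤ rcomp (rcomp (MB.δx x) (coker φ)) (coker φ) b (crispDesc φ a') :=
            rcomp_mono (f2 x) le_rfl b (crispDesc φ a')
        _ = rcomp (MB.δx x) (rcomp (coker φ) (coker φ)) b (crispDesc φ a') := by
            rw [rcomp_assoc (MB.δx x) (coker φ) (coker φ)]
        _ ≤ rcomp (MB.δx x) (coker φ) b (crispDesc φ a') :=
            rcomp_mono le_rfl (comp_self_le (coker_trans φ)) b (crispDesc φ a')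
        _ = rcomp (MB.δx x) (inv φ) b a' := by
            simp only [rcomp, inv]
            exact iSup_congr fun b₃ => by
              rw [coker_symm φ b₃ (crispDesc φ a'), key1 hu a' b₃]
    have c3 : rscomp (inv φ) MA.τ ≤ MB.τ := by
      intro b
      refine iSup_le fun a => ?_
      show φ a b * MA.τ a ≤ MB.τ b
      calc φ a b * MA.τ a ≤ φ a b * rscomp (ker φ) MA.τ a :=
            crl_mul_le_mul le_rfl (le_rscomp_refl (ker_refl φ) a)
        _ = φ a b * rscomp (coker φ) MB.τ (crispDesc φ a) := by rw [Iτ a]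
        _ = coker φ (crispDesc φ a) b * rscomp (coker φ) MB.τ (crispDesc φ a) := by
            rw [key1 hu a b]
        _ ≤ rscomp (coker φ) MB.τ b :=
            absorb_rscomp (coker_symm φ) (coker_trans φ) MB.τ (crispDesc φ a) b
        _ ≤ MB.τ b := f3 b
    have c4 : MB.σ ≤ scomp MA.σ (inv (inv φ)) := by
      intro b
      obtain ⟨a₀, ha₀⟩ := hu.2.2 b
      have hb₀ : coker φ (crispDesc φ a₀) = coker φ b :=
        coker_class_eq (by rw [key1 hu]; exact ha₀)
      calc MB.σ b ≤ scomp MB.σ (coker φ) b := le_scomp_refl (coker_refl φ) b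
        _ = scomp MB.σ (coker φ) (crispDesc φ a₀) :=
            (scomp_class_congr (coker_symm φ) hb₀ MB.σ).symm
        _ = scomp MA.σ (ker φ) a₀ := (Iσ a₀).symm
        _ ≤ scomp MA.σ (inv (inv φ)) b := by
            refine iSup_le fun a => ?_
            refine le_trans (crl_mul_le_mul le_rfl ?_)
              (le_iSup (fun a => MA.σ a * inv (inv φ) a b) a)
            show ker φ a a₀ ≤ inv (inv φ) a b
            calc ker φ a a₀ = ker φ a a₀ * φ a₀ b := by rw [ha₀, mul_one]
              _ ≤ φ a b := ker_mul_le a a₀ b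
    have c5 : ∀ x, rcomp (inv (inv φ)) (MB.δx x) ≤ rcomp (MA.δx x) (inv (inv φ)) := by
      intro x a b'
      refine iSup_le fun b => ?_
      show φ a b * MB.δx x b b' ≤ rcomp (MA.δx x) (inv (inv φ)) a b'
      obtain ⟨a₀, ha₀⟩ := hu.2.2 b
      obtain ⟨a₁, ha₁⟩ := hu.2.2 b'
      have hb₀ : coker φ b = coker φ (crispDesc φ a₀) :=
        (coker_class_eq (by rw [key1 hu]; exact ha₀)).symm
      have hb₁ : coker φ b' = coker φ (crispDesc φ a₁) :=
        (coker_class_eq (by rw [key1 hu]; exact ha₁)).symm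
      calc φ a b * MB.δx x b b'
          ≤ φ a b * rcomp (rcomp (coker φ) (MB.δx x)) (coker φ) b b' :=
            crl_mul_le_mul le_rfl (hD'le x b b')
        _ = ker φ a a₀ * rcomp (rcomp (coker φ) (MB.δx x)) (coker φ)
              (crispDesc φ a₀) (crispDesc φ a₁) := by
            rw [rcomp_class_congr (coker_symm φ) hb₀ hb₁, key3 hu.1 ha₀ a]
        _ = ker φ a₀ a * rcomp (ker φ) (rcomp (MA.δx x) (ker φ)) a₀ a₁ := by
            rw [← Iδ x a₀ a₁, ker_symm φ a a₀, rcomp_assoc (ker φ) (MA.δx x) (ker φ)]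
        _ ≤ rcomp (ker φ) (rcomp (MA.δx x) (ker φ)) a a₁ :=
            absorb_rcomp (ker_symm φ) (ker_trans φ) _ a₀ a a₁
        _ = rcomp (rcomp (ker φ) (MA.δx x)) (ker φ) a a₁ := by
            rw [rcomp_assoc (ker φ) (MA.δx x) (ker φ)]
        _ ≤ rcomp (rcomp (MA.δx x) (ker φ)) (ker φ) a a₁ :=
            rcomp_mono (e2 x) le_rfl a a₁
        _ = rcomp (MA.δx x) (rcomp (ker φ) (ker φ)) a a₁ := by
            rw [rcomp_assoc (MA.δx x) (ker φ) (ker φ)]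
        _ ≤ rcomp (MA.δx x) (ker φ) a a₁ :=
            rcomp_mono le_rfl (comp_self_le (ker_trans φ)) a a₁
        _ ≤ rcomp (MA.δx x) (inv (inv φ)) a b' := by
            refine iSup_le fun a₂ => ?_
            refine le_trans (crl_mul_le_mul le_rfl ?_)
              (le_iSup (fun a₂ => MA.δx x a a₂ * inv (inv φ) a₂ b') a₂)
            show ker φ a₂ a₁ ≤ inv (inv φ) a₂ b'
            calc ker φ a₂ a₁ = ker φ a₂ a₁ * φ a₁ b' := by rw [ha₁, mul_one]
              _ ≤ φ a₂ b' := ker_mul_le a₂ a₁ b'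
    have c6 : rscomp (inv (inv φ)) MB.τ ≤ MA.τ := by
      intro a
      refine iSup_le fun b => ?_
      show φ a b * MB.τ b ≤ MA.τ a
      calc φ a b * MB.τ b = coker φ (crispDesc φ a) b * MB.τ b := by rw [key1 hu a b]
        _ ≤ rscomp (coker φ) MB.τ (crispDesc φ a) :=
            le_iSup (fun b' => coker φ (crispDesc φ a) b' * MB.τ b') b
        _ = rscomp (ker φ) MA.τ a := (Iτ a).symm
        _ ≤ MA.τ a := e3 a
    exact ⟨⟨c1, c2, c3⟩, c4, c5, c6⟩

end FuzzyAutomataBisim
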